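/- For every separable LMP 𝕊, the Zhou ordinal Z(𝕊) exists and has cardinality at most 2^ℵ₀; equivalently, Z(𝕊) < (2^ℵ₀)⁺, the cardinal successor of the continuum. -/

import Mathlib

open MeasureTheory

/-- A labelled Markov process over the measurable space `S` with label set `L`:
each `τ a` is a Markov kernel, i.e. `τ a s` is a subprobability measure for each state `s`,
and `s ↦ τ a s E` is measurable for each measurable `E`. -/
structure LMP (S : Type*) (L : Type*) [MeasurableSpace S] where
  τ : L → S → Measure S
  prob_le_one : ∀ (a : L) (s : S), τ a s Set.univ ≤ 1
  measurable_eval : ∀ (a : L) (E : Set S), MeasurableSet E → Measurable fun s => τ a s E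

namespace LMP

variable {S L : Type*} [MeasurableSpace S]

/-- `A` is `R`-closed: anything related to a point of `A` lies in `A`. -/
def RClosed (R : Set (S × S)) (A : Set S) : Prop :=
  ∀ ⦃x⦄, x ∈ A → ∀ ⦃s⦄, (x, s) ∈ R → s ∈ A

/-- `Σ(R)`: the family of measurable `R`-closed sets. -/
def sigmaCl (R : Set (S × S)) : Set (Set S) :=
  {A | MeasurableSet A ∧ RClosed R A}

/-- `R(Λ)`: the relation identifying states belonging to exactly the same members of `Λ`. -/
def rel (Λ : Set (Set S)) : Set (S × S) :=
  {p | ∀ A ∈ Λ, p.1 ∈ A ↔ p.2 ∈ A}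

/-- `R^T(Λ)`: states assigning the same probabilities to every member of `Λ`, for all labels. -/
def relT (M : LMP S L) (Λ : Set (Set S)) : Set (S × S) :=
  {p | ∀ (a : L), ∀ E ∈ Λ, M.τ a p.1 E = M.τ a p.2 E}

/-- The operator `𝒪`. -/
def Oop (M : LMP S L) (R : Set (S × S)) : Set (S × S) :=
  M.relT (sigmaCl R)

/-- The operator `𝒢`. -/
def Gop (M : LMP S L) (Λ : Set (Set S)) : Set (Set S) :=
  sigmaCl (M.relT Λ)

/-- The members of the σ-algebra generated by a family of sets. -/
def sigmaGen (U : Set (Set S)) : Set (Set S) :=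
  {A | MeasurableSet[MeasurableSpace.generateFrom U] A}

/-- Transfinite iterates of `𝒪`. -/
noncomputable def Oiter (M : LMP S L) (R : Set (S × S)) (α : Ordinal) : Set (S × S) :=
  Ordinal.limitRecOn α R (fun _ prev => M.Oop prev)
    (fun o _ ih => ⋂ (o' : Ordinal) (h : o' < o), ih o' h)

/-- Transfinite iterates of `𝒢`. -/
noncomputable def Giter (M : LMP S L) (Λ : Set (Set S)) (α : Ordinal) : Set (Set S) :=
  Ordinal.limitRecOn α Λ (fun _ prev => M.Gop prev)
    (fun o _ ih => sigmaGen (⋃ (o' : Ordinal) (h : o' < o), ih o' h))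

/-- `Λ` is a sub-σ-algebra of the ambient σ-algebra. -/
structure IsSubSigmaAlgebra (Λ : Set (Set S)) : Prop where
  subset_meas : ∀ A ∈ Λ, MeasurableSet A
  empty_mem : (∅ : Set S) ∈ Λ
  compl_mem : ∀ A ∈ Λ, Aᶜ ∈ Λ
  iUnion_mem : ∀ f : ℕ → Set S, (∀ n, f n ∈ Λ) → (⋃ n, f n) ∈ Λ

/-- A family `Λ` is stable w.r.t. the process. -/
def Stable (M : LMP S L) (Λ : Set (Set S)) : Prop :=
  ∀ A ∈ Λ, ∀ q : ℚ, 0 ≤ q → q ≤ 1 → ∀ a : L,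
    {s : S | ENNReal.ofReal (q : ℝ) < M.τ a s A} ∈ Λ

/-- A state bisimulation: a symmetric relation such that related states agree on
all measurable `R`-closed sets. -/
def IsStateBisim (M : LMP S L) (R : Set (S × S)) : Prop :=
  (∀ p ∈ R, (p.2, p.1) ∈ R) ∧
    ∀ p ∈ R, ∀ (a : L), ∀ C ∈ sigmaCl R, M.τ a p.1 C = M.τ a p.2 C

/-- State bisimilarity. -/
def stateBisim (M : LMP S L) : Set (S × S) :=
  {p | ∃ R, M.IsStateBisim R ∧ p ∈ R}

/-- Event bisimilarity: related by `R(Λ)` for some stable sub-σ-algebra `Λ`. -/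
def eventBisim (M : LMP S L) : Set (S × S) :=
  {p | ∃ Λ : Set (Set S), IsSubSigmaAlgebra Λ ∧ M.Stable Λ ∧ p ∈ rel Λ}

/-- Formulas of the modal logic `𝓛`. -/
inductive LForm (L : Type*) : Type _
  | top : LForm L
  | and : LForm L → LForm L → LForm L
  | dia : L → {q : ℚ // 0 ≤ q ∧ q < 1} → LForm L → LForm L

/-- Semantics of the logic `𝓛`. -/
def sem (M : LMP S L) : LForm L → Set S
  | LForm.top => Set.univ
  | LForm.and φ ψ => M.sem φ ∩ M.sem ψ
  | LForm.dia a q φ => {s | ENNReal.ofReal ((q : ℚ) : ℝ) < M.τ a s (M.sem φ)}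

/-- `σ(⟦𝓛⟧)`: the σ-algebra generated by the sets definable in the logic. -/
def sigmaLogic (M : LMP S L) : Set (Set S) :=
  sigmaGen (Set.range M.sem)

end LMP

/-- A measurable space is separable if its σ-algebra is countably generated and
separates points. -/
def SeparableMeasurableSpace (S : Type*) [m : MeasurableSpace S] : Prop :=
  (∃ U : Set (Set S), U.Countable ∧ MeasurableSpace.generateFrom U = m) ∧
    ∀ s t : S, s ≠ t → ∃ A : Set S, MeasurableSet A ∧ s ∈ A ∧ t ∉ A

namespace LMP

/-- `ζ` is the Zhou ordinal of `M`: the least ordinal `α` such that `𝒪^α(∼e) = ∼s`. -/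
def IsZhou {S L : Type*} [MeasurableSpace S] (M : LMP S L) (ζ : Ordinal) : Prop :=
  M.Oiter M.eventBisim ζ = M.stateBisim ∧
    ∀ β < ζ, M.Oiter M.eventBisim β ≠ M.stateBisim

end LMP

/-!
`𝒪` is monotone and its greatest fixed point is `∼s`: a fixed point is a state bisimulation.
Event bisimilarity is equivalence for the logic `𝓛` (the σ-algebra generated by `⟦𝓛⟧` is the
least stable one), and states that `𝒪(∼e)`-agree on the `∼e`-closed sets `⟦φ⟧` satisfy the
same formulas, so `𝒪(∼e) ⊆ ∼e`. Hence `𝒪^α(∼e)` is the decreasing approximation of the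
greatest fixed point from `∼e ⊇ ∼s`. A chain of subsets of `S × S` can drop strictly at most
`#(S × S)` times, so it stabilises, necessarily at `∼s`, before `(#(S × S))⁺`; separability
embeds `S` into `2^ℕ`, so this is at most `(2^ℵ₀)⁺`.
-/

open MeasureTheory MeasurableSpace Cardinal OrdinalApprox
open scoped ENNReal

universe u

section FixedPointApproximants

variable {α : Type u}

theorem exists_lt_ord_succ_mk_add_one_eq_of_antitone {f : Ordinal.{u} → Set α}
    (hf : Antitone f) : ∃ a < (Order.succ #α).ord, f (a + 1) = f a := by
  rcases isEmpty_or_nonempty α with hα | hα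
  · exact ⟨0, by simp, Subsingleton.elim _ _⟩
  by_contra! hne
  have hdrop : ∀ a < (Order.succ #α).ord, (f a \ f (a + 1)).Nonempty := fun a ha =>
    Set.sdiff_nonempty.2 fun h => hne a ha ((hf le_self_add).antisymm h)
  -- the points dropped at different steps are distinct
  let g : Ordinal.{u} → α := fun a => Classical.epsilon (· ∈ f a \ f (a + 1))
  have hg : ∀ a < (Order.succ #α).ord, g a ∈ f a \ f (a + 1) := fun a ha =>
    Classical.epsilon_spec (hdrop a ha)
  have hgf : ∀ a < (Order.succ #α).ord, ∀ b, a < b → g a ∉ f b := fun a ha b hab hb =>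
    (hg a ha).2 (hf (Order.add_one_le_of_lt hab) hb)
  refine not_injective_limitation_set g fun a ha b hb hab => ?_
  rcases lt_trichotomy a b with hlt | rfl | hlt
  · exact (hgf a ha b hlt (hab ▸ (hg b hb).1)).elim
  · rfl
  · exact (hgf b hb a hlt (hab ▸ (hg a ha).1)).elim

theorem exists_lt_ord_succ_mk_gfpApprox_eq_gfp {f : Set α →o Set α} {x : Set α}
    (hx : f x ≤ x) (hgfp : f.gfp ≤ x) :
    ∃ a < (Order.succ #α).ord, gfpApprox f x a = f.gfp := by
  obtain ⟨a, ha, hfix⟩ :=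
    exists_lt_ord_succ_mk_add_one_eq_of_antitone (gfpApprox_anti_right f (x := x))
  refine ⟨a, ha, le_antisymm ?_ (le_gfpApprox_of_mem_fixedPoints f f.isFixedPt_gfp hgfp a)⟩
  rw [gfpApprox_add_one f hx] at hfix
  exact f.le_gfp hfix.ge

end FixedPointApproximants

theorem SeparableMeasurableSpace.mk_le_continuum {S : Type u} [MeasurableSpace S]
    (hsep : SeparableMeasurableSpace S) : #S ≤ 𝔠 := by
  obtain ⟨⟨U, hU, hgen⟩, hpts⟩ := hsep
  have : CountablyGenerated S := ⟨⟨U, hU, hgen.symm⟩⟩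
  have : SeparatesPoints S := ⟨fun x y hxy => by
    by_contra hne
    obtain ⟨A, hA, hxA, hyA⟩ := hpts x y hne
    exact hyA (hxy A hA hxA)⟩
  simpa using lift_mk_le_lift_mk_of_injective (injective_mapNatBool S)

theorem measurable_measure_apply_of_isPiSystem {α β : Type*} [mα : MeasurableSpace α]
    [MeasurableSpace β] {μ : α → Measure β} [∀ a, IsFiniteMeasure (μ a)] {C : Set (Set β)}
    (hC : ∀ t ∈ C, MeasurableSet t) (hpi : IsPiSystem C)
    (hbasic : ∀ t ∈ C, Measurable fun a => μ a t) (huniv : Measurable fun a => μ a Set.univ)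
    {t : Set β} (ht : MeasurableSet[generateFrom C] t) : Measurable fun a => μ a t := by
  induction t, ht using induction_on_inter rfl hpi with
  | empty => simp
  | basic t ht => exact hbasic t ht
  | compl t ht ih =>
    simp only [measure_compl (generateFrom_le hC t ht) (measure_ne_top _ _)]
    exact huniv.sub ih
  | iUnion f hd hf ih =>
    simpa only [measure_iUnion hd fun n => generateFrom_le hC _ (hf n)] using .tsum ih

namespace LMP

variable {S L : Type*} [MeasurableSpace S] (M : LMP S L)

instance isFiniteMeasure_τ (a : L) (s : S) : IsFiniteMeasure (M.τ a s) :=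
  ⟨(M.prob_le_one a s).trans_lt ENNReal.one_lt_top⟩

section StateBisimulation

variable {R : Set (S × S)}

theorem swap_mem_relT {Λ : Set (Set S)} {p : S × S} (hp : p ∈ M.relT Λ) :
    p.swap ∈ M.relT Λ :=
  fun a E hE => (hp a E hE).symm

theorem sigmaCl_anti : Antitone (sigmaCl : Set (S × S) → Set (Set S)) :=
  fun _ _ h _ hA => ⟨hA.1, fun _ hx _ hxs => hA.2 hx (h hxs)⟩

theorem Oop_mono : Monotone M.Oop :=
  fun _ _ h _ hp a E hE => hp a E (sigmaCl_anti h hE)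

def OopHom : Set (S × S) →o Set (S × S) := ⟨M.Oop, M.Oop_mono⟩

theorem isStateBisim_iff : M.IsStateBisim R ↔ (∀ p ∈ R, p.swap ∈ R) ∧ R ⊆ M.Oop R :=
  Iff.rfl

variable {M} in
theorem IsStateBisim.subset_stateBisim (h : M.IsStateBisim R) : R ⊆ M.stateBisim :=
  fun _ hp => ⟨R, h, hp⟩

theorem isStateBisim_stateBisim : M.IsStateBisim M.stateBisim := by
  constructor
  · rintro p ⟨R, hR, hp⟩
    exact hR.subset_stateBisim (hR.1 p hp)
  · rintro p ⟨R, hR, hp⟩ a C hC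
    exact hR.2 p hp a C (sigmaCl_anti hR.subset_stateBisim hC)

theorem stateBisim_eq_gfp : M.stateBisim = M.OopHom.gfp := by
  refine le_antisymm (M.OopHom.le_gfp (M.isStateBisim_iff.1 M.isStateBisim_stateBisim).2) ?_
  have hfix : M.Oop M.OopHom.gfp = M.OopHom.gfp := M.OopHom.map_gfp
  refine IsStateBisim.subset_stateBisim (M.isStateBisim_iff.2 ⟨fun q hq => ?_, hfix.ge⟩)
  rw [← hfix] at hq ⊢
  exact M.swap_mem_relT hq

end StateBisimulation

section EventBisimulation

abbrev IsSubSigmaAlgebra.measurableSpace {Λ : Set (Set S)} (hΛ : IsSubSigmaAlgebra Λ) :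
    MeasurableSpace S where
  MeasurableSet' := (· ∈ Λ)
  measurableSet_empty := hΛ.empty_mem
  measurableSet_compl := hΛ.compl_mem
  measurableSet_iUnion := hΛ.iUnion_mem

theorem isSubSigmaAlgebra_sigmaGen {U : Set (Set S)} (hU : ∀ A ∈ U, MeasurableSet A) :
    IsSubSigmaAlgebra (sigmaGen U) :=
  ⟨generateFrom_le hU, @MeasurableSet.empty _ (generateFrom U),
    fun _ => @MeasurableSet.compl _ _ (generateFrom U),
    fun _ => @MeasurableSet.iUnion _ _ (generateFrom U) _ _⟩

variable {R : Set (S × S)}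

theorem isSubSigmaAlgebra_sigmaCl (hR : ∀ p ∈ R, p.swap ∈ R) :
    IsSubSigmaAlgebra (sigmaCl R) where
  subset_meas _ hA := hA.1
  empty_mem := ⟨.empty, fun _ hx => hx.elim⟩
  compl_mem A hA := ⟨hA.1.compl, fun x hx s hxs hs => hx (hA.2 hs (hR _ hxs))⟩
  iUnion_mem f hf := ⟨.iUnion fun n => (hf n).1, fun x hx s hxs => by
    obtain ⟨n, hn⟩ := Set.mem_iUnion.1 hx
    exact Set.mem_iUnion.2 ⟨n, (hf n).2 hn hxs⟩⟩

theorem stable_sigmaCl (hR : R ⊆ M.Oop R) : M.Stable (sigmaCl R) := fun A hA q _ _ a =>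
  ⟨M.measurable_eval a A hA.1 measurableSet_Ioi, fun x hx s hxs => by
    simpa only [Set.mem_ofPred_eq, hR hxs a A hA] using hx⟩

theorem IsStateBisim.subset_eventBisim (h : M.IsStateBisim R) : R ⊆ M.eventBisim :=
  fun p hp => ⟨sigmaCl R, isSubSigmaAlgebra_sigmaCl h.1, M.stable_sigmaCl h.2,
    fun _ hA => ⟨fun h1 => hA.2 h1 hp, fun h2 => hA.2 h2 (h.1 p hp)⟩⟩

theorem stateBisim_subset_eventBisim : M.stateBisim ⊆ M.eventBisim :=
  M.isStateBisim_stateBisim.subset_eventBisim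

end EventBisimulation

section Logic

theorem measurableSet_sem (φ : LForm L) : MeasurableSet (M.sem φ) := by
  induction φ with
  | top => exact .univ
  | and φ ψ hφ hψ => exact hφ.inter hψ
  | dia a q φ hφ => exact M.measurable_eval a _ hφ measurableSet_Ioi

theorem sem_mem_of_stable {Λ : Set (Set S)} (hΛ : IsSubSigmaAlgebra Λ) (hs : M.Stable Λ)
    (φ : LForm L) : M.sem φ ∈ Λ := by
  induction φ with
  | top => exact @MeasurableSet.univ _ hΛ.measurableSpace
  | and φ ψ hφ hψ => exact @MeasurableSet.inter _ hΛ.measurableSpace _ _ hφ hψ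
  | dia a q φ hφ => exact hs _ hφ q q.2.1 q.2.2.le a

theorem isPiSystem_range_sem : IsPiSystem (Set.range M.sem) := by
  rintro _ ⟨φ, rfl⟩ _ ⟨ψ, rfl⟩ _
  exact ⟨.and φ ψ, rfl⟩

theorem measurable_τ_sem (a : L) (φ : LForm L) :
    Measurable[generateFrom (Set.range M.sem)] fun s => M.τ a s (M.sem φ) := by
  refine measurable_of_Ioi (α := ℝ≥0∞) fun c => ?_
  have hpre : (fun s => M.τ a s (M.sem φ)) ⁻¹' Set.Ioi c =
      ⋃ (q : {q : ℚ // 0 ≤ q ∧ q < 1}) (_ : c < ENNReal.ofReal (q : ℚ)),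
        M.sem (.dia a q φ) := by
    ext s
    simp only [Set.mem_preimage, Set.mem_Ioi, Set.mem_iUnion, sem, Set.mem_ofPred_eq]
    refine ⟨fun hc => ?_, fun ⟨q, hcq, hqs⟩ => hcq.trans hqs⟩
    -- `dia` only takes thresholds `q < 1`; that suffices since `τ ≤ 1`
    obtain ⟨q, hq0, hcq, hqs⟩ := ENNReal.lt_iff_exists_rat_btwn.1 hc
    have hq1 : q < 1 := by
      have hτ : M.τ a s (M.sem φ) ≤ 1 :=
        (measure_mono (Set.subset_univ _)).trans (M.prob_le_one a s)
      exact_mod_cast ENNReal.ofReal_lt_one.1 (hqs.trans_le hτ)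
    exact ⟨⟨q, hq0, hq1⟩, hcq, hqs⟩
  rw [hpre]
  exact .iUnion fun q => .iUnion fun _ => measurableSet_generateFrom ⟨.dia a q φ, rfl⟩

theorem measurable_τ_of_mem_sigmaLogic (a : L) {A : Set S} (hA : A ∈ M.sigmaLogic) :
    Measurable[generateFrom (Set.range M.sem)] fun s => M.τ a s A :=
  measurable_measure_apply_of_isPiSystem (mα := generateFrom (Set.range M.sem))
    (by rintro _ ⟨φ, rfl⟩; exact M.measurableSet_sem φ) M.isPiSystem_range_sem
    (by rintro _ ⟨φ, rfl⟩; exact M.measurable_τ_sem a φ) (M.measurable_τ_sem a .top) hA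

theorem stable_sigmaLogic : M.Stable M.sigmaLogic := fun _ hA _ _ _ a =>
  M.measurable_τ_of_mem_sigmaLogic a hA measurableSet_Ioi

theorem mem_eventBisim_iff {p : S × S} :
    p ∈ M.eventBisim ↔ ∀ φ : LForm L, (p.1 ∈ M.sem φ ↔ p.2 ∈ M.sem φ) := by
  constructor
  · rintro ⟨Λ, hΛ, hs, hp⟩ φ
    exact hp _ (M.sem_mem_of_stable hΛ hs φ)
  · intro hp
    refine ⟨M.sigmaLogic, isSubSigmaAlgebra_sigmaGen ?_, M.stable_sigmaLogic, ?_⟩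
    · rintro _ ⟨φ, rfl⟩
      exact M.measurableSet_sem φ
    · exact forall_generateFrom_mem_iff_mem_iff.2 (by rintro _ ⟨φ, rfl⟩; exact hp φ)

theorem Oop_eventBisim_subset : M.Oop M.eventBisim ⊆ M.eventBisim := by
  intro p hp
  rw [mem_eventBisim_iff]
  intro φ
  induction φ with
  | top => exact Iff.rfl
  | and φ ψ hφ hψ => exact and_congr hφ hψ
  | dia a q φ _ =>
    have hφ : M.sem φ ∈ sigmaCl M.eventBisim :=
      ⟨M.measurableSet_sem φ, fun _ hx _ hxs => ((M.mem_eventBisim_iff.1 hxs) φ).1 hx⟩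
    simp only [sem, Set.mem_ofPred_eq, hp a _ hφ]

end Logic

theorem Oiter_eq_gfpApprox {R : Set (S × S)} (hR : M.Oop R ⊆ R) (α : Ordinal) :
    M.Oiter R α = gfpApprox M.OopHom R α := by
  induction α using Ordinal.limitRecOn with
  | zero => rw [Oiter, Ordinal.limitRecOn_zero, gfpApprox_zero]
  | add_one α ih =>
    rw [Oiter, Ordinal.limitRecOn_add_one, ← Oiter, ih, gfpApprox_add_one _ hR]
    rfl
  | limit α hα ih =>
    rw [Oiter, Ordinal.limitRecOn_limit _ _ _ _ hα, gfpApprox_of_isSuccLimit _ hα]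
    ext p
    simp only [Set.mem_iInter, Set.iInf_eq_iInter, Subtype.forall, Set.mem_Iio]
    exact forall₂_congr fun β hβ => by rw [← Oiter, ih β hβ]

end LMP

theorem LMP.exists_lt_ord_succ_mk_Oiter_eventBisim_eq_stateBisim {S L : Type u}
    [MeasurableSpace S] (M : LMP S L) :
    ∃ ζ < (Order.succ #(S × S)).ord, M.Oiter M.eventBisim ζ = M.stateBisim := by
  obtain ⟨ζ, hζ, hgfp⟩ := exists_lt_ord_succ_mk_gfpApprox_eq_gfp M.Oop_eventBisim_subset
    (M.stateBisim_eq_gfp ▸ M.stateBisim_subset_eventBisim)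
  refine ⟨ζ, hζ, ?_⟩
  rw [M.Oiter_eq_gfpApprox M.Oop_eventBisim_subset, hgfp, M.stateBisim_eq_gfp]

theorem exists_zhou_ordinal_card_le_continuum_general
    {S L : Type u} [MeasurableSpace S] (M : LMP S L)
    (hsep : SeparableMeasurableSpace S) :
    ∃ ζ : Ordinal.{u}, M.IsZhou ζ ∧ ζ.card ≤ Cardinal.continuum := by
  obtain ⟨ζ₀, hζ₀, hfix⟩ := M.exists_lt_ord_succ_mk_Oiter_eventBisim_eq_stateBisim
  obtain ⟨ζ, hζ, hmin⟩ := wellFounded_lt.has_min {β | M.Oiter M.eventBisim β = M.stateBisim}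
    ⟨ζ₀, hfix⟩
  refine ⟨ζ, ⟨hζ, fun β hβ hβfix => hmin β hβfix hβ⟩, ?_⟩
  have hSS : #(S × S) ≤ 𝔠 := by
    have hS := hsep.mk_le_continuum
    simpa [mk_prod, mul_eq_self aleph0_le_continuum] using mul_le_mul' hS hS
  calc ζ.card ≤ ζ₀.card := Ordinal.card_le_card (not_lt.1 (hmin ζ₀ hfix))
    _ ≤ #(S × S) := Order.lt_succ_iff.1 (lt_ord.1 hζ₀)
    _ ≤ 𝔠 := hSS

/-- For every separable LMP `𝕊`, the Zhou ordinal `Z(𝕊)` exists and has cardinality at most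
`2^ℵ₀`; equivalently `Z(𝕊) < (2^ℵ₀)⁺`. -/
theorem exists_zhou_ordinal_card_le_continuum
    {S L : Type u} [MeasurableSpace S] [Countable L] (M : LMP S L)
    (hsep : SeparableMeasurableSpace S) :
    ∃ ζ : Ordinal.{u}, M.IsZhou ζ ∧ ζ.card ≤ Cardinal.continuum :=
  exists_zhou_ordinal_card_le_continuum_general M hsep
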